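/- arXiv:2208.11678 — 4 statements merged into one kernel-verified Lean document; each statement's English description precedes it below -/
import Mathlib

section
/- The convex cone K = {Ax : x ∈ ℝ₊ⁿ} generated by the columns of a real m×n matrix A is a closed subset of ℝᵐ. -/
open Finset

lemma cone_aux (n : ℕ) : ∀ {m : ℕ} (a : Fin n → EuclideanSpace ℝ (Fin m)),
    IsClosed {v : EuclideanSpace ℝ (Fin m) |
      ∃ x : Fin n → ℝ, (∀ i, 0 ≤ x i) ∧ v = ∑ i, x i • a i} := by
  induction n with
  | zero =>
    intro m a
    have : {v : EuclideanSpace ℝ (Fin m) |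
        ∃ x : Fin 0 → ℝ, (∀ i, 0 ≤ x i) ∧ v = ∑ i, x i • a i} = {0} := by
      ext v
      constructor
      · rintro ⟨x, -, rfl⟩; simp
      · rintro rfl; exact ⟨Fin.elim0, fun i => i.elim0, by simp⟩
    rw [this]; exact isClosed_singleton
  | succ n ih =>
    intro m a
    by_cases hli : LinearIndependent ℝ a
    · -- closed embedding case
      set f : (Fin (n+1) → ℝ) →ₗ[ℝ] EuclideanSpace ℝ (Fin m) :=
        { toFun := fun x => ∑ i, x i • a i
          map_add' := by intro x y; simp [add_smul, Finset.sum_add_distrib]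
          map_smul' := by intro c x; simp [smul_smul, Finset.smul_sum] }
      have hinj : LinearMap.ker f = ⊥ := by
        rw [LinearMap.ker_eq_bot']
        intro x hx
        have := linearIndependent_iff'.mp hli Finset.univ x (by simpa [f] using hx)
        funext i; exact this i (Finset.mem_univ i)
      have hce := f.isClosedEmbedding_of_injective hinj
      have hset : {v : EuclideanSpace ℝ (Fin m) |
          ∃ x : Fin (n+1) → ℝ, (∀ i, 0 ≤ x i) ∧ v = ∑ i, x i • a i}
          = f '' {x | ∀ i, 0 ≤ x i} := by
        ext v
        constructor
        · rintro ⟨x, hx, rfl⟩; exact ⟨x, hx, rfl⟩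
        · rintro ⟨x, hx, rfl⟩; exact ⟨x, hx, rfl⟩
      rw [hset]
      have hK : IsClosed {x : Fin (n+1) → ℝ | ∀ i, 0 ≤ x i} := by
        have : {x : Fin (n+1) → ℝ | ∀ i, 0 ≤ x i} = ⋂ i, {x | 0 ≤ x i} := by
          ext x; simp [Set.mem_iInter]
        rw [this]
        exact isClosed_iInter fun i => isClosed_le continuous_const (continuous_apply i)
      exact hce.isClosedMap _ hK
    · -- dependent case: union over omitted index
      have hset : {v : EuclideanSpace ℝ (Fin m) |
          ∃ x : Fin (n+1) → ℝ, (∀ i, 0 ≤ x i) ∧ v = ∑ i, x i • a i}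
          = ⋃ j : Fin (n+1), {v : EuclideanSpace ℝ (Fin m) |
            ∃ x : Fin n → ℝ, (∀ i, 0 ≤ x i) ∧ v = ∑ i, x i • a (j.succAbove i)} := by
        ext v
        simp only [Set.mem_setOf_eq, Set.mem_iUnion]
        constructor
        · rintro ⟨x, hx, rfl⟩
          -- find c with ∑ c i • a i = 0, c with a negative entry
          obtain ⟨c, hc0, hcne⟩ : ∃ c : Fin (n+1) → ℝ,
              (∑ i, c i • a i = 0) ∧ ∃ i, c i < 0 := by
            rw [Fintype.not_linearIndependent_iff] at hli
            obtain ⟨g, hg0, i0, hi0⟩ := hli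
            rcases lt_or_gt_of_ne hi0 with h | h
            · exact ⟨g, hg0, i0, h⟩
            · exact ⟨-g, by simpa [neg_smul] using congrArg Neg.neg hg0,
                i0, by simpa using h⟩
          set s : Finset (Fin (n+1)) := Finset.univ.filter (fun i => c i < 0) with hs
          have hsne : s.Nonempty := ⟨hcne.choose, by simp [hs, hcne.choose_spec]⟩
          obtain ⟨j, hjs, hjmin⟩ := s.exists_min_image (fun i => x i / (-c i)) hsne
          have hcj : c j < 0 := by simpa [hs] using hjs
          set t : ℝ := x j / (-c j) with ht
          have ht0 : 0 ≤ t := div_nonneg (hx j) (by linarith)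
          set y : Fin (n+1) → ℝ := fun i => x i + t * c i with hy
          have hy0 : ∀ i, 0 ≤ y i := by
            intro i
            by_cases hci : c i < 0
            · have := hjmin i (by simp [hs, hci])
              have hci' : 0 < -c i := by linarith
              have : t * (-c i) ≤ (x i / (-c i)) * (-c i) :=
                mul_le_mul_of_nonneg_right this (le_of_lt hci')
              rw [div_mul_cancel₀ _ (ne_of_gt hci')] at this
              simp only [hy]; nlinarith
            · push_neg at hci
              have : 0 ≤ t * c i := mul_nonneg ht0 hci
              simp only [hy]; linarith [hx i]
          have hyj : y j = 0 := by
            have hdiv : c j / -c j = -1 := by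
              rw [div_neg, div_self (ne_of_lt hcj)]
            simp only [hy, ht, div_mul_eq_mul_div, mul_div_assoc, hdiv]
            ring
          have hsum : ∑ i, y i • a i = ∑ i, x i • a i := by
            simp only [hy, add_smul, Finset.sum_add_distrib, mul_smul]
            rw [← Finset.smul_sum, hc0, smul_zero, add_zero]
          refine ⟨j, fun i => y (j.succAbove i), fun i => hy0 _, ?_⟩
          rw [← hsum, Fin.sum_univ_succAbove (fun i => y i • a i) j, hyj, zero_smul, zero_add]
        · rintro ⟨j, x, hx, rfl⟩
          set z : Fin (n+1) → ℝ := j.insertNth 0 x with hz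
          refine ⟨z, ?_, ?_⟩
          · intro i
            refine Fin.succAboveCases j ?_ ?_ i
            · simp [hz]
            · intro k; simpa [hz] using hx k
          · rw [Fin.sum_univ_succAbove (fun i => z i • a i) j]
            simp [hz]
      rw [hset]
      exact isClosed_iUnion_of_finite fun j => ih (fun i => a (j.succAbove i))

theorem cone_of_columns_isClosed (m n : ℕ) (a : Fin n → EuclideanSpace ℝ (Fin m)) :
    IsClosed {v : EuclideanSpace ℝ (Fin m) |
      ∃ x : Fin n → ℝ, (∀ i, 0 ≤ x i) ∧ v = ∑ i, x i • a i} := by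
  exact cone_aux n a
end

section
/- Farkas' lemma: For a real m×n matrix A with columns a₁,…,aₙ and a vector b ∈ ℝᵐ, exactly one of the following holds: (1) there exists x ∈ ℝ₊ⁿ with Ax = b; (2) there exists y ∈ ℝᵐ with ⟨aᵢ, y⟩ ≥ 0 for all i = 1,…,n and ⟨b, y⟩ < 0. -/
/-!
Let `C = {∑ xᵢ aᵢ | x ≥ 0}`. The two alternatives exclude each other because `⟪∑ xᵢ aᵢ, y⟫` is a
nonnegative combination of the `⟪aᵢ, y⟫`. If `b ∉ C`, the separation theorem for closed convex
cones yields `y` with `⟪·, y⟫ ≥ 0` on `C` and `⟪b, y⟫ < 0`, so the real content is that `C` is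
closed. This is conic Carathéodory: if the `aᵢ` with `i ∈ s` are linearly dependent, moving along
a kernel direction as in the ratio test clears a coordinate, so the cone over `s` is a finite union
of cones over smaller index sets; if they are independent, the cone over `s` is an injective linear
image of a closed orthant.
-/

open scoped RealInnerProductSpace

open LinearMap Set Topology

theorem LinearMap.isClosed_image_of_disjoint_ker {𝕜 E F : Type*} [NontriviallyNormedField 𝕜]
    [CompleteSpace 𝕜] [AddCommGroup E] [Module 𝕜 E] [TopologicalSpace E] [IsTopologicalAddGroup E]
    [ContinuousSMul 𝕜 E] [T2Space E] [FiniteDimensional 𝕜 E] [AddCommGroup F] [Module 𝕜 F]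
    [TopologicalSpace F] [IsTopologicalAddGroup F] [ContinuousSMul 𝕜 F] [T2Space F]
    (f : E →ₗ[𝕜] F) {V : Submodule 𝕜 E} (hV : Disjoint V (ker f)) {K : Set E} (hK : IsClosed K)
    (hKV : K ⊆ V) : IsClosed (f '' K) := by
  have hf : IsClosedEmbedding (f.domRestrict V) :=
    isClosedEmbedding_of_injective (ker_eq_bot.2 (injective_domRestrict_iff.2 hV))
  have := hf.isClosedMap _ (hK.preimage continuous_subtype_val)
  change IsClosed ((f ∘ Subtype.val) '' _) at this
  rwa [image_comp, image_preimage_eq_inter_range, Subtype.range_val, inter_eq_left.2 hKV] at this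

theorem Submodule.exists_apply_pos_of_ne_bot {ι 𝕜 : Type*} [Field 𝕜] [LinearOrder 𝕜]
    [IsStrictOrderedRing 𝕜] {p : Submodule 𝕜 (ι → 𝕜)} (hp : p ≠ ⊥) :
    ∃ d ∈ p, ∃ j, 0 < d j := by
  obtain ⟨d, hd, hd0⟩ := p.ne_bot_iff.1 hp
  obtain ⟨j, hj⟩ := Function.ne_iff.1 hd0
  rcases hj.lt_or_gt with hneg | hpos
  · exact ⟨-d, p.neg_mem hd, j, by simpa using hneg⟩
  · exact ⟨d, hd, j, hpos⟩

section OrthantFace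

variable {ι 𝕜 : Type*} [Field 𝕜]

variable (𝕜) in
def supportedOn (s : Set ι) : Submodule 𝕜 (ι → 𝕜) := Submodule.pi sᶜ fun _ ↦ ⊥

theorem mem_supportedOn {s : Set ι} {x : ι → 𝕜} : x ∈ supportedOn 𝕜 s ↔ ∀ i ∉ s, x i = 0 := by
  simp [supportedOn, Submodule.mem_pi]

variable [LinearOrder 𝕜]

variable (𝕜) in
def orthantFace (s : Set ι) : Set (ι → 𝕜) := Ici 0 ∩ supportedOn 𝕜 s

theorem orthantFace_univ : orthantFace 𝕜 (univ : Set ι) = Ici 0 := by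
  ext x; simp [orthantFace, mem_supportedOn]

theorem orthantFace_mono {s t : Set ι} (hst : s ⊆ t) : orthantFace 𝕜 s ⊆ orthantFace 𝕜 t :=
  fun _ ⟨hx, hxs⟩ ↦ ⟨hx, mem_supportedOn.2 fun i hi ↦ mem_supportedOn.1 hxs i (hi <| hst ·)⟩

variable [IsStrictOrderedRing 𝕜] [Fintype ι]

/-- The ratio test of the simplex method: moving from `x` against `d` by the smallest ratio
`x k / d k` over `d k > 0` keeps `x` nonnegative and clears the coordinate `k`. -/
theorem exists_sub_smul_nonneg_apply_eq_zero {x d : ι → 𝕜} (hx : 0 ≤ x) {j : ι} (hj : 0 < d j) :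
    ∃ t : 𝕜, ∃ k, 0 < d k ∧ 0 ≤ x - t • d ∧ (x - t • d) k = 0 := by
  classical
  obtain ⟨k, hk, hmin⟩ :=
    Finset.exists_min_image {i | 0 < d i} (fun i ↦ x i / d i) ⟨j, by simpa using hj⟩
  rw [Finset.mem_filter_univ] at hk
  refine ⟨x k / d k, k, hk, fun i ↦ ?_, by simp [hk.ne']⟩
  rw [Pi.zero_apply, Pi.sub_apply, Pi.smul_apply, smul_eq_mul, sub_nonneg]
  rcases le_or_gt (d i) 0 with hi | hi
  · exact (mul_nonpos_of_nonneg_of_nonpos (div_nonneg (hx k) hk.le) hi).trans (hx i)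
  · exact (le_div_iff₀ hi).1 (hmin i (by simpa using hi))

variable {M : Type*} [AddCommGroup M] [Module 𝕜 M]

theorem image_orthantFace_eq_biUnion (f : (ι → 𝕜) →ₗ[𝕜] M) {s : Set ι} {d : ι → 𝕜}
    (hd : d ∈ supportedOn 𝕜 s ⊓ ker f) {j : ι} (hj : 0 < d j) :
    f '' orthantFace 𝕜 s = ⋃ k ∈ {k | 0 < d k}, f '' orthantFace 𝕜 (s \ {k}) := by
  refine (iUnion₂_subset fun k _ ↦ image_mono (orthantFace_mono sdiff_subset)).antisymm' ?_
  rintro _ ⟨x, ⟨hx, hxs⟩, rfl⟩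
  obtain ⟨hds, hdf⟩ := Submodule.mem_inf.1 hd
  obtain ⟨t, k, hk, hx', hxk⟩ := exists_sub_smul_nonneg_apply_eq_zero hx hj
  refine mem_biUnion hk
    ⟨x - t • d, ⟨hx', mem_supportedOn.2 fun i hi ↦ ?_⟩, by simp [mem_ker.1 hdf]⟩
  rcases eq_or_ne i k with rfl | hik
  · exact hxk
  · have hi : i ∉ s := fun h ↦ hi ⟨h, hik⟩
    simp [mem_supportedOn.1 hxs i hi, mem_supportedOn.1 hds i hi]

end OrthantFace

theorem isClosed_orthantFace {ι : Type*} [Finite ι] (s : Set ι) : IsClosed (orthantFace ℝ s) :=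
  isClosed_Ici.inter (Submodule.closed_of_finiteDimensional _)

theorem isClosed_image_orthantFace {ι M : Type*} [Fintype ι] [AddCommGroup M] [Module ℝ M]
    [TopologicalSpace M] [IsTopologicalAddGroup M] [ContinuousSMul ℝ M] [T2Space M]
    (f : (ι → ℝ) →ₗ[ℝ] M) (s : Set ι) : IsClosed (f '' orthantFace ℝ s) := by
  induction s using WellFoundedLT.induction with | _ s ih
  by_cases hinj : Disjoint (supportedOn ℝ s) (ker f)
  · exact f.isClosed_image_of_disjoint_ker hinj (isClosed_orthantFace s) inter_subset_right
  obtain ⟨d, hd, j, hj⟩ := Submodule.exists_apply_pos_of_ne_bot (p := supportedOn ℝ s ⊓ ker f)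
    (by rwa [ne_eq, ← disjoint_iff])
  rw [image_orthantFace_eq_biUnion f hd hj]
  refine (toFinite _).isClosed_biUnion fun k hk ↦ ih _ (sdiff_singleton_ssubset.2 ?_)
  by_contra hks
  exact hk.ne' (mem_supportedOn.1 (Submodule.mem_inf.1 hd).1 k hks)

theorem inner_sum_smul_nonneg {ι E : Type*} [Fintype ι] [NormedAddCommGroup E]
    [InnerProductSpace ℝ E] {x : ι → ℝ} (hx : ∀ i, 0 ≤ x i) {a : ι → E} {y : E}
    (hy : ∀ i, 0 ≤ ⟪a i, y⟫) :
    0 ≤ ⟪∑ i, x i • a i, y⟫ := by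
  rw [sum_inner]
  exact Finset.sum_nonneg fun i _ ↦ by rw [real_inner_smul_left]; exact mul_nonneg (hx i) (hy i)

theorem exists_inner_neg_of_not_exists_nonneg_sum_smul_eq {ι E : Type*} [Fintype ι]
    [NormedAddCommGroup E] [InnerProductSpace ℝ E] [CompleteSpace E] (a : ι → E) {b : E}
    (hb : ¬∃ x : ι → ℝ, (∀ i, 0 ≤ x i) ∧ ∑ i, x i • a i = b) :
    ∃ y : E, (∀ i, 0 ≤ ⟪a i, y⟫) ∧ ⟪b, y⟫ < 0 := by
  classical
  let f := Fintype.linearCombination ℝ a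
  let C : ProperCone ℝ E := ⟨(PointedCone.positive ℝ (ι → ℝ)).map f, by
    simpa [orthantFace_univ] using isClosed_image_orthantFace f univ⟩
  have hC (v : E) : v ∈ C ↔ ∃ x : ι → ℝ, 0 ≤ x ∧ f x = v := PointedCone.mem_map
  obtain ⟨y, hy, hby⟩ := C.hyperplane_separation' (x₀ := b) fun hbC ↦ by
    obtain ⟨x, hx, rfl⟩ := (hC b).1 hbC
    exact hb ⟨x, hx, (Fintype.linearCombination_apply ℝ a x).symm⟩
  refine ⟨y, fun i ↦ hy _ ((hC _).2 ⟨Pi.single i 1, ?_, ?_⟩), hby⟩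
  · exact Pi.single_nonneg.2 zero_le_one
  · simp [f, Fintype.linearCombination_apply_single]

theorem farkas_lemma (m n : ℕ) (a : Fin n → EuclideanSpace ℝ (Fin m))
    (b : EuclideanSpace ℝ (Fin m)) :
    Xor' (∃ x : Fin n → ℝ, (∀ i, 0 ≤ x i) ∧ ∑ i, x i • a i = b)
      (∃ y : EuclideanSpace ℝ (Fin m), (∀ i, 0 ≤ ⟪a i, y⟫) ∧ ⟪b, y⟫ < 0) := by
  refine (xor_iff_or_and_not_and _ _).2
    ⟨or_iff_not_imp_left.2 (exists_inner_neg_of_not_exists_nonneg_sum_smul_eq a), ?_⟩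
  rintro ⟨⟨x, hx, rfl⟩, y, hy, hby⟩
  exact hby.not_ge (inner_sum_smul_nonneg hx hy)
end

section
/- If a sequence {uₖ} of optimal vectors for A converges to a vector u, then Au ≠ 0. Consequently, the infimum c of ‖Au‖ over all optimal vectors u is strictly positive (provided A ≠ 0). -/
/-- `u` is optimal for the columns `a`: `u ∈ [0,1]ⁿ`, `‖u‖ = 1`, and no nonnegative `z`
with `Az = Au` has strictly fewer nonzero components than `u`. -/
def IsOptimal {m n : ℕ} (a : Fin n → EuclideanSpace ℝ (Fin m))
    (u : EuclideanSpace ℝ (Fin n)) : Prop :=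
  (∀ i, u i ∈ Set.Icc (0:ℝ) 1) ∧ ‖u‖ = 1 ∧
    ¬ ∃ z : Fin n → ℝ, (∀ i, 0 ≤ z i) ∧ (∑ i, z i • a i) = (∑ i, u i • a i) ∧
      (Finset.univ.filter fun i => z i ≠ 0).card <
        (Finset.univ.filter fun i => u i ≠ 0).card

open Filter Topology

/-!
A limit `l` of optimal vectors is a nonnegative unit vector, and every optimal `u` close to `l`
has support containing that of `l`. If `Al = 0`, subtracting from `u` the largest multiple of `l`
that keeps it nonnegative leaves `Au` unchanged and kills a coordinate, contradicting optimality.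
The optimal vectors lie in the unit sphere, so the closure of their set is compact and
`‖Au‖` attains a positive minimum on it.
-/

theorem exists_nonneg_sum_smul_eq_card_support_lt {𝕜 ι M : Type*} [Field 𝕜] [LinearOrder 𝕜]
    [IsStrictOrderedRing 𝕜] [Fintype ι] [AddCommGroup M] [Module 𝕜 M] (a : ι → M)
    {u v : ι → 𝕜} (hu : ∀ i, 0 ≤ u i) (hv : ∀ i, 0 ≤ v i) (hv0 : v ≠ 0)
    (hAv : ∑ i, v i • a i = 0) (hsupp : ∀ i, v i ≠ 0 → u i ≠ 0) :
    ∃ z : ι → 𝕜, (∀ i, 0 ≤ z i) ∧ ∑ i, z i • a i = ∑ i, u i • a i ∧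
      (Finset.univ.filter fun i => z i ≠ 0).card < (Finset.univ.filter fun i => u i ≠ 0).card := by
  have hT : (Finset.univ.filter fun i => v i ≠ 0).Nonempty := by
    obtain ⟨i, hi⟩ := Function.ne_iff.1 hv0
    exact ⟨i, Finset.mem_filter.2 ⟨Finset.mem_univ i, hi⟩⟩
  obtain ⟨j, hjT, hjmin⟩ := Finset.exists_min_image _ (fun i => u i / v i) hT
  have hvj : v j ≠ 0 := (Finset.mem_filter.1 hjT).2
  set t := u j / v j
  have htv_le : ∀ i, t * v i ≤ u i := fun i => by
    rcases (hv i).eq_or_lt with hvi | hvi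
    · simp [← hvi, hu i]
    · exact (le_div_iff₀ hvi).1 (hjmin i (Finset.mem_filter.2 ⟨Finset.mem_univ i, hvi.ne'⟩))
  refine ⟨fun i => u i - t * v i, fun i => sub_nonneg.2 (htv_le i), ?_, Finset.card_lt_card ?_⟩
  · simp only [sub_smul, Finset.sum_sub_distrib, mul_smul, ← Finset.smul_sum, hAv, smul_zero,
      sub_zero]
  · refine (Finset.ssubset_iff_of_subset fun i hi => ?_).2 ⟨j, ?_, ?_⟩
    · simp only [Finset.mem_filter, Finset.mem_univ, true_and] at hi ⊢
      intro hui
      have hvi : v i = 0 := by_contra fun h => hsupp i h hui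
      simp [hui, hvi] at hi
    · simpa using hsupp j hvj
    · simp [t, div_mul_cancel₀ _ hvj]

theorem IsOptimal.sum_smul_ne_zero_of_support_subset {m n : ℕ}
    {a : Fin n → EuclideanSpace ℝ (Fin m)} {u : EuclideanSpace ℝ (Fin n)} (hu : IsOptimal a u)
    {v : Fin n → ℝ} (hv : ∀ i, 0 ≤ v i) (hv0 : v ≠ 0) (hsupp : ∀ i, v i ≠ 0 → u i ≠ 0) :
    ∑ i, v i • a i ≠ 0 := fun hAv =>
  hu.2.2 (exists_nonneg_sum_smul_eq_card_support_lt a (fun i => (hu.1 i).1) hv hv0 hAv hsupp)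

theorem EuclideanSpace.isClosed_setOf_forall_mem_Icc {ι : Type*} (b c : ℝ) :
    IsClosed {x : EuclideanSpace ℝ ι | ∀ i, x i ∈ Set.Icc b c} := by
  simp only [Set.ofPred_forall]
  exact isClosed_iInter fun i => isClosed_Icc.preimage (EuclideanSpace.proj i).continuous

theorem closure_setOf_isOptimal_subset {m n : ℕ} (a : Fin n → EuclideanSpace ℝ (Fin m)) :
    closure {u | IsOptimal a u} ⊆
      {x | ∀ i, x i ∈ Set.Icc (0:ℝ) 1} ∩ Metric.sphere (0 : EuclideanSpace ℝ (Fin n)) 1 :=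
  closure_minimal (fun _ hu => ⟨hu.1, mem_sphere_zero_iff_norm.2 hu.2.1⟩)
    ((EuclideanSpace.isClosed_setOf_forall_mem_Icc 0 1).inter Metric.isClosed_sphere)

theorem isCompact_closure_setOf_isOptimal {m n : ℕ} (a : Fin n → EuclideanSpace ℝ (Fin m)) :
    IsCompact (closure {u | IsOptimal a u}) :=
  (isCompact_sphere 0 1).of_isClosed_subset isClosed_closure
    ((closure_setOf_isOptimal_subset a).trans Set.inter_subset_right)

theorem sum_smul_ne_zero_of_mem_closure_setOf_isOptimal {m n : ℕ}
    (a : Fin n → EuclideanSpace ℝ (Fin m)) {l : EuclideanSpace ℝ (Fin n)}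
    (hl : l ∈ closure {u | IsOptimal a u}) : ∑ i, l i • a i ≠ 0 := by
  obtain ⟨hl_Icc, hl_sphere⟩ := closure_setOf_isOptimal_subset a hl
  have hl0 : l ≠ 0 := ne_zero_of_mem_unit_sphere ⟨l, hl_sphere⟩
  have hsupp_nhds : {x : EuclideanSpace ℝ (Fin n) | ∀ i, l i ≠ 0 → x i ≠ 0} ∈ 𝓝 l := by
    simp only [Set.ofPred_forall]
    exact Filter.iInter_mem.2 fun i => Filter.iInter_mem.2 fun hli =>
      (EuclideanSpace.proj i).continuous.continuousAt.eventually_ne hli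
  obtain ⟨u, hsupp, hu⟩ := mem_closure_iff_nhds.1 hl _ hsupp_nhds
  exact hu.sum_smul_ne_zero_of_support_subset (fun i => (hl_Icc i).1)
    (fun h => hl0 (WithLp.ofLp_injective _ h)) hsupp

theorem isOptimal_single {m n : ℕ} {a : Fin n → EuclideanSpace ℝ (Fin m)} {j : Fin n}
    (hj : a j ≠ 0) : IsOptimal a (EuclideanSpace.single j 1) := by
  refine ⟨fun i => ?_, by simp, ?_⟩
  · by_cases h : i = j <;> simp [h]
  · rintro ⟨z, -, hz, hcard⟩
    have hsupp : (Finset.univ.filter fun i => EuclideanSpace.single j (1:ℝ) i ≠ 0) = {j} := by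
      ext i; simp
    rw [hsupp, Finset.card_singleton, Nat.lt_one_iff, Finset.card_eq_zero,
      Finset.filter_eq_empty_iff] at hcard
    have hz0 : ∀ i, z i = 0 := fun i => by simpa using hcard (Finset.mem_univ i)
    simp [hz0] at hz
    exact hj hz.symm

theorem limit_of_optimal_ne_zero_and_inf_pos (m n : ℕ)
    (a : Fin n → EuclideanSpace ℝ (Fin m)) (hA : a ≠ 0) :
    (∀ (u : ℕ → EuclideanSpace ℝ (Fin n)) (l : EuclideanSpace ℝ (Fin n)),
        (∀ k, IsOptimal a (u k)) → Tendsto u atTop (𝓝 l) → (∑ i, l i • a i) ≠ 0) ∧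
      0 < sInf {r : ℝ | ∃ u : EuclideanSpace ℝ (Fin n), IsOptimal a u ∧ r = ‖∑ i, u i • a i‖} := by
  refine ⟨fun u l hopt hto => sum_smul_ne_zero_of_mem_closure_setOf_isOptimal a
    (mem_closure_of_tendsto hto (Eventually.of_forall hopt)), ?_⟩
  obtain ⟨j, hj⟩ := Function.ne_iff.1 hA
  have hAu_cont : Continuous fun u : EuclideanSpace ℝ (Fin n) => ‖∑ i, u i • a i‖ := by
    fun_prop
  obtain ⟨x, hx, hmin⟩ := (isCompact_closure_setOf_isOptimal a).exists_isMinOn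
    ⟨_, subset_closure (isOptimal_single hj)⟩ hAu_cont.continuousOn
  refine (norm_pos_iff.2 (sum_smul_ne_zero_of_mem_closure_setOf_isOptimal a hx)).trans_le
    (le_csInf ⟨_, _, isOptimal_single hj, rfl⟩ ?_)
  rintro r ⟨u, hu, rfl⟩
  exact hmin (subset_closure hu)
end

section
/- Let v be the point of K closest to b (with b ∉ K) and set y = v − b. Then ⟨aᵢ, y⟩ ≥ 0 for every column aᵢ of A, ⟨−v, y⟩ ≥ 0, and ⟨b, y⟩ ≤ −‖y‖² < 0. -/
open scoped RealInnerProductSpace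

theorem nearest_point_separation (m n : ℕ)
    (a : Fin n → EuclideanSpace ℝ (Fin m)) (b v : EuclideanSpace ℝ (Fin m))
    (K : Set (EuclideanSpace ℝ (Fin m)))
    (hK : K = {w | ∃ x : Fin n → ℝ, (∀ i, 0 ≤ x i) ∧ w = ∑ i, x i • a i})
    (hb : b ∉ K) (hv : v ∈ K) (hmin : ∀ w ∈ K, ‖v - b‖ ≤ ‖w - b‖)
    (y : EuclideanSpace ℝ (Fin m)) (hy : y = v - b) :
    (∀ i, 0 ≤ ⟪a i, y⟫) ∧ 0 ≤ ⟪-v, y⟫ ∧ ⟪b, y⟫ ≤ -‖y‖ ^ 2 ∧ ⟪b, y⟫ < 0 := by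
  obtain ⟨x, hx, hxv⟩ : ∃ x : Fin n → ℝ, (∀ i, 0 ≤ x i) ∧ v = ∑ i, x i • a i := by
    rw [hK] at hv; exact hv
  -- Variational inequality
  have hconv : ∀ d : EuclideanSpace ℝ (Fin m),
      (∀ t : ℝ, 0 < t → t ≤ 1 → v + t • d ∈ K) → 0 ≤ ⟪d, y⟫ := by
    intro d hd
    by_contra hneg
    push_neg at hneg
    have hdnorm : 0 < ‖d‖ := by
      rcases eq_or_ne d 0 with h | h
      · rw [h] at hneg; simp at hneg
      · exact norm_pos_iff.mpr h
    set c := ⟪d, y⟫ with hc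
    set t := min 1 (-c / ‖d‖ ^ 2) with htdef
    have ht0 : 0 < t := lt_min one_pos (div_pos (neg_pos.mpr hneg) (by positivity))
    have ht1 : t ≤ 1 := min_le_left _ _
    have h1 : ‖v - b‖ ≤ ‖v + t • d - b‖ := hmin _ (hd t ht0 ht1)
    have h2 : ‖y‖ ^ 2 ≤ ‖y + t • d‖ ^ 2 := by
      rw [hy]
      have he : v + t • d - b = (v - b) + t • d := by abel
      rw [← he]
      exact pow_le_pow_left₀ (norm_nonneg _) h1 2
    rw [norm_add_sq_real, real_inner_smul_right, norm_smul] at h2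
    have hsum : 0 ≤ 2 * (t * ⟪y, d⟫) + (|t| * ‖d‖) ^ 2 := by
      simp only [Real.norm_eq_abs] at h2; nlinarith
    rw [abs_of_pos ht0, real_inner_comm] at hsum
    have htb : t ≤ -c / ‖d‖ ^ 2 := min_le_right _ _
    have htb' : t * ‖d‖ ^ 2 ≤ -c := by
      rw [le_div_iff₀ (by positivity)] at htb; linarith
    nlinarith
  have h_ai : ∀ i, 0 ≤ ⟪a i, y⟫ := by
    intro i
    apply hconv
    intro t ht0 _
    rw [hK]
    refine ⟨fun j => x j + if j = i then t else 0, fun j => add_nonneg (hx j) (by split <;> [linarith; rfl]), ?_⟩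
    simp only [add_smul, ite_smul, zero_smul, Finset.sum_add_distrib,
      Finset.sum_ite_eq' Finset.univ i, Finset.mem_univ, if_true, hxv]
  have hv_nonneg : 0 ≤ ⟪v, y⟫ := by
    apply hconv
    intro t ht0 _
    rw [hK]
    refine ⟨fun j => (1 + t) * x j, fun j => mul_nonneg (by linarith) (hx j), ?_⟩
    rw [hxv]
    simp [Finset.smul_sum, mul_smul, add_smul, Finset.sum_add_distrib]
  have hnv_nonneg : 0 ≤ ⟪-v, y⟫ := by
    apply hconv
    intro t ht0 ht1
    rw [hK]
    refine ⟨fun j => (1 - t) * x j, fun j => mul_nonneg (by linarith) (hx j), ?_⟩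
    have : v + t • (-v) = (1 - t) • v := by
      rw [sub_smul, one_smul, smul_neg]; abel
    rw [this, hxv, Finset.smul_sum]
    simp [mul_smul]
  have hvy : ⟪v, y⟫ = 0 := by
    rw [inner_neg_left] at hnv_nonneg; linarith
  have hynz : y ≠ 0 := by
    intro h
    apply hb
    have : v = b := by rw [hy] at h; rwa [sub_eq_zero] at h
    rwa [← this]
  have hby : ⟪b, y⟫ = -‖y‖ ^ 2 := by
    have hb' : b = v - y := by rw [hy]; abel
    rw [hb', inner_sub_left, hvy, real_inner_self_eq_norm_sq]
    ring
  refine ⟨h_ai, hnv_nonneg, le_of_eq hby, ?_⟩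
  rw [hby]
  have : 0 < ‖y‖ := norm_pos_iff.mpr hynz
  nlinarith
end
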